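/- arXiv:2301.12933 — 2 statements merged into one kernel-verified Lean document; each statement's English description precedes it below -/
import Mathlib

section
/- Let G and H be connected graphs with λ_k(G) = a and λ_k(H) = b where b ≥ a ≥ ⌊k/2⌋, and let S be a set of k vertices of G □ H such that the projection S_G of S to V(G) is a single vertex and the projection S_H to V(H) has k distinct elements (or vice versa). Then there exist at least a + b pairwise edge-disjoint S-Steiner trees in G □ H. -/
open SimpleGraph

/-- `T` is an `S`-Steiner tree in `G`: a subgraph of `G` that is a tree containing `S`. -/
def IsSteinerTree {V : Type*} (G : SimpleGraph V) (S : Set V) (T : G.Subgraph) : Prop :=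
  S ⊆ T.verts ∧ T.coe.IsTree

/-- There exist `n` pairwise edge-disjoint `S`-Steiner trees in `G`. -/
def HasEDSteinerTrees {V : Type*} (G : SimpleGraph V) (S : Set V) (n : ℕ) : Prop :=
  ∃ f : Fin n → G.Subgraph, (∀ i, IsSteinerTree G S (f i)) ∧
    ∀ i j, i ≠ j → Disjoint (f i).edgeSet (f j).edgeSet

/-- Generalized local edge-connectivity: max number of pairwise edge-disjoint S-Steiner trees. -/
noncomputable def steinerLambda {V : Type*} (G : SimpleGraph V) (S : Set V) : ℕ :=
  sSup {n | HasEDSteinerTrees G S n}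

/-- Generalized k-edge-connectivity. -/
noncomputable def genLambda {V : Type*} [Fintype V] (G : SimpleGraph V) (k : ℕ) : ℕ :=
  sInf {m | ∃ S : Finset V, S.card = k ∧ steinerLambda G ↑S = m}

/-- Ordinary edge-connectivity ("cut" version). -/
noncomputable def edgeConn {V : Type*} [Fintype V] (G : SimpleGraph V) : ℕ :=
  sInf {n | ∃ M : Finset (Sym2 V), M.card = n ∧ ↑M ⊆ G.edgeSet ∧
    ¬ (G.deleteEdges ↑M).Connected}

/-- Minimum degree. -/
noncomputable def minDeg {V : Type*} [Fintype V] (G : SimpleGraph V) : ℕ :=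
  @SimpleGraph.minDegree V G _ (Classical.decRel _)

/-- There exist `n` pairwise edge-disjoint spanning trees of `G`. -/
def HasEDSpanningTrees {V : Type*} (G : SimpleGraph V) (n : ℕ) : Prop :=
  ∃ f : Fin n → G.Subgraph, (∀ i, (f i).IsSpanning ∧ (f i).coe.IsTree) ∧
    ∀ i j, i ≠ j → Disjoint (f i).edgeSet (f j).edgeSet

/-- Maximum number of pairwise edge-disjoint spanning trees. -/
noncomputable def spanningTreePacking {V : Type*} (G : SimpleGraph V) : ℕ :=
  sSup {n | HasEDSpanningTrees G n}

/-!
Say `S` lies in the fibre `{v} × V(H)`, with projection `B ⊆ V(H)`, `|B| = k`. The `b`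
edge-disjoint `B`-Steiner trees of `H`, copied into the fibre over `v`, give `b` trees. Since
`λ_k(G) = a`, the vertex `v` has `a` distinct neighbours `u_i`: the `a` edge-disjoint Steiner
trees of a `k`-set containing `v` each use their own edge at `v`. For each `u_i`, the copy of `H`
over `u_i` together with the edges `(u_i, y)(v, y)`, `y ∈ B`, is connected and contains `S`, so it
contains an `S`-Steiner tree. Projecting edges to `G` shows that these `a + b` subgraphs are
pairwise edge-disjoint. The other case follows from the symmetry of `□`.
-/

open Function

namespace SimpleGraph.Subgraph

variable {V : Type*} {Γ : SimpleGraph V}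

theorem Connected.exists_isTree_le {K : Γ.Subgraph} (hK : K.Connected) :
    ∃ T ≤ K, T.verts = K.verts ∧ T.coe.IsTree := by
  obtain ⟨F, hFK, hF⟩ := hK.coe.exists_isTree_le
  let f : F.Copy Γ := K.coeCopy.comp (Copy.ofLE F K.coe hFK)
  refine ⟨f.toSubgraph, ⟨?_, ?_⟩, ?_, f.isoToSubgraph.isTree_iff.mp hF⟩
  · rintro _ ⟨x, -, rfl⟩
    exact x.2
  · rintro _ _ ⟨x, y, hxy, rfl, rfl⟩
    exact hFK hxy
  · ext x
    simp [f, coeCopy]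

theorem Connected.sup_biSup {ι : Type*} {K : Γ.Subgraph} (hK : K.Connected)
    {L : ι → Γ.Subgraph} (s : Finset ι) (hL : ∀ i ∈ s, (L i).Connected)
    (hKL : ∀ i ∈ s, (K ⊓ L i).verts.Nonempty) : (K ⊔ ⨆ i ∈ s, L i).Connected := by
  classical
  induction s using Finset.induction_on with
  | empty => simpa using hK
  | insert i s hi ih =>
    rw [Finset.iSup_insert, sup_left_comm, sup_comm]
    refine connected_sup
      (ih (fun j hj => hL j (by simp [hj])) (fun j hj => hKL j (by simp [hj]))).preconnected
      (hL i (by simp)).preconnected ?_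
    refine (hKL i (by simp)).mono ?_
    simp only [verts_inf, verts_sup]
    exact Set.inter_subset_inter_left _ Set.subset_union_left

end SimpleGraph.Subgraph

namespace HasEDSteinerTrees

variable {V W : Type*} {Γ : SimpleGraph V} {S : Set V} {m n : ℕ}

theorem zero (Γ : SimpleGraph V) (S : Set V) : HasEDSteinerTrees Γ S 0 :=
  ⟨Fin.elim0, fun i => i.elim0, fun i => i.elim0⟩

theorem mono (h : HasEDSteinerTrees Γ S n) (hmn : m ≤ n) : HasEDSteinerTrees Γ S m := by
  obtain ⟨T, hT, hdisj⟩ := h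
  exact ⟨T ∘ Fin.castLE hmn, fun i => hT _,
    fun i j hij => hdisj _ _ ((Fin.castLE_injective hmn).ne hij)⟩

theorem of_subset_singleton {x : V} (hS : S ⊆ {x}) (n : ℕ) : HasEDSteinerTrees Γ S n :=
  ⟨fun _ => Γ.singletonSubgraph x, fun _ => ⟨hS, IsTree.coe_singletonSubgraph Γ x⟩,
    fun _ _ _ => by simp⟩

theorem exists_injective_adj (h : HasEDSteinerTrees Γ S n) {v y : V} (hv : v ∈ S) (hy : y ∈ S)
    (hvy : v ≠ y) : ∃ u : Fin n → V, Injective u ∧ ∀ i, Γ.Adj v (u i) := by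
  obtain ⟨T, hT, hdisj⟩ := h
  have hadj (i : Fin n) : ∃ w, (T i).Adj v w := by
    have : Nontrivial (T i).verts :=
      ⟨⟨⟨v, (hT i).1 hv⟩, ⟨y, (hT i).1 hy⟩, fun h => hvy (congrArg Subtype.val h)⟩⟩
    exact (Subgraph.connected_iff'.2 (hT i).2.connected).preconnected.exists_adj_of_nontrivial
      ⟨v, (hT i).1 hv⟩
  choose u hu using hadj
  refine ⟨u, fun i j huij => ?_, fun i => (T i).adj_sub (hu i)⟩
  by_contra hij
  refine Set.disjoint_left.1 (hdisj i j hij) (Subgraph.mem_edgeSet.2 (hu i)) ?_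
  rw [huij]
  exact hu j

theorem map {Γ' : SimpleGraph W} (f : Γ ↪g Γ') (h : HasEDSteinerTrees Γ S n) :
    HasEDSteinerTrees Γ' (f '' S) n := by
  obtain ⟨T, hT, hdisj⟩ := h
  refine ⟨fun i => (T i).map f.toHom,
    fun i => ⟨Set.image_mono (hT i).1, (f.toCopy.isoSubgraphMap (T i)).isTree_iff.mp (hT i).2⟩,
    fun i j hij => ?_⟩
  simp only [Subgraph.edgeSet_map]
  exact (Set.disjoint_image_iff (Sym2.map.injective f.injective)).2 (hdisj i j hij)

end HasEDSteinerTrees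

section SteinerLambda

variable {V : Type*} {Γ : SimpleGraph V} {S : Set V} {n : ℕ}

theorem hasEDSteinerTrees_of_connected {ι : Type*} [Fintype ι] (K : ι → Γ.Subgraph)
    (hK : ∀ i, (K i).Connected) (hS : ∀ i, S ⊆ (K i).verts)
    (hdisj : Pairwise (Disjoint on fun i => (K i).edgeSet)) :
    HasEDSteinerTrees Γ S (Fintype.card ι) := by
  choose T hTK hTv hT using fun i => (hK i).exists_isTree_le
  let e := Fintype.equivFin ι
  refine ⟨T ∘ e.symm, fun i => ⟨(hTv _).symm ▸ hS _, hT _⟩, fun i j hij => ?_⟩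
  exact (hdisj (e.symm.injective.ne hij)).mono (Subgraph.edgeSet_mono (hTK _))
    (Subgraph.edgeSet_mono (hTK _))

/-- Every `n` is attained, so `sSup` falls back to its junk value `0`. -/
theorem steinerLambda_eq_zero_of_subset_singleton {x : V} (hS : S ⊆ {x}) :
    steinerLambda Γ S = 0 := by
  have hunbdd : ¬ BddAbove {n | HasEDSteinerTrees Γ S n} := fun ⟨m, hm⟩ =>
    m.lt_succ_self.not_ge (hm (HasEDSteinerTrees.of_subset_singleton hS (m + 1)))
  rw [steinerLambda, csSup_of_not_bddAbove hunbdd, csSup_empty]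
  rfl

theorem hasEDSteinerTrees_of_le_steinerLambda [Finite V] (hS : S.Nonempty)
    (hn : n ≤ steinerLambda Γ S) : HasEDSteinerTrees Γ S n := by
  obtain ⟨x, rfl⟩ | ⟨v, hv, y, hy, hvy⟩ := hS.exists_eq_singleton_or_nontrivial
  · rw [steinerLambda_eq_zero_of_subset_singleton subset_rfl, Nat.le_zero] at hn
    exact hn ▸ HasEDSteinerTrees.zero Γ _
  · have hbdd : BddAbove {n | HasEDSteinerTrees Γ S n} := ⟨Nat.card V, fun m hm => by
      obtain ⟨u, hu, -⟩ := hm.exists_injective_adj hv hy hvy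
      simpa using Nat.card_le_card_of_injective u hu⟩
    exact (Nat.sSup_mem ⟨0, HasEDSteinerTrees.zero Γ S⟩ hbdd).mono hn

theorem exists_injective_adj_of_le_genLambda [Fintype V] (v : V) {k : ℕ}
    (hn : n ≤ genLambda Γ k) : ∃ u : Fin n → V, Injective u ∧ ∀ i, Γ.Adj v (u i) := by
  classical
  obtain rfl | hpos := n.eq_zero_or_pos
  · exact ⟨Fin.elim0, fun i => i.elim0, fun i => i.elim0⟩
  have hle (S : Finset V) (hS : S.card = k) : n ≤ steinerLambda Γ S :=
    hn.trans (Nat.sInf_le ⟨S, hS, rfl⟩)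
  have hbig (S : Finset V) (hS : S.card = k) : 1 < S.card := by
    by_contra! hsmall
    obtain ⟨x, hx⟩ := (@Finset.card_le_one_iff_subset_singleton _ _ ⟨v⟩).1 hsmall
    have := hle S hS
    rw [steinerLambda_eq_zero_of_subset_singleton (by exact_mod_cast hx)] at this
    omega
  obtain ⟨-, S₀, hS₀, -⟩ := Nat.nonempty_of_pos_sInf (hpos.trans_le hn)
  obtain ⟨S, hvS, hSk⟩ := Finset.exists_superset_card_eq (s := {v})
    (hS₀ ▸ (hbig S₀ hS₀).le) (hS₀ ▸ S₀.card_le_univ)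
  obtain ⟨y, hyS, hyv⟩ := S.exists_mem_ne (hbig S hSk) v
  have hv : v ∈ S := hvS (Finset.mem_singleton_self v)
  exact (hasEDSteinerTrees_of_le_steinerLambda ⟨v, hv⟩ (hle S hSk)).exists_injective_adj
    hv hyS hyv.symm

end SteinerLambda

namespace SimpleGraph

variable {α β : Type*} {G : SimpleGraph α} (H : SimpleGraph β)

def boxProdComb {u v : α} (huv : G.Adj u v) (B : Finset β) : (G □ H).Subgraph :=
  (⊤ : H.Subgraph).map (G.boxProdRight H u).toHom ⊔
    ⨆ y ∈ B, (G □ H).subgraphOfAdj (boxProd_adj_left.2 huv : (G □ H).Adj (u, y) (v, y))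

variable {H} {u v : α} {B : Finset β}

theorem boxProdComb_connected (huv : G.Adj u v) (hH : H.Connected) :
    (boxProdComb H huv B).Connected := by
  refine Subgraph.Connected.sup_biSup ?_ B (fun y _ => Subgraph.subgraphOfAdj_connected _)
    (fun y _ => ⟨(u, y), by simp⟩)
  rw [Subgraph.connected_iff']
  exact (G.boxProdRight H u).toCopy.isoToSubgraph.connected_iff.1 hH

theorem subset_boxProdComb_verts (huv : G.Adj u v) :
    {v} ×ˢ (B : Set β) ⊆ (boxProdComb H huv B).verts := by
  rintro ⟨x, y⟩ ⟨rfl, hy⟩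
  simp only [boxProdComb, Subgraph.verts_sup, Subgraph.verts_iSup, subgraphOfAdj_verts]
  exact Or.inr (Set.mem_biUnion hy (by simp))

theorem map_fst_of_mem_boxProdComb_edgeSet (huv : G.Adj u v) {e : Sym2 (α × β)}
    (he : e ∈ (boxProdComb H huv B).edgeSet) :
    e.map Prod.fst = s(u, u) ∨ e.map Prod.fst = s(u, v) := by
  simp only [boxProdComb, Subgraph.edgeSet_sup, Subgraph.edgeSet_iSup, Subgraph.edgeSet_map,
    edgeSet_subgraphOfAdj, Set.mem_union, Set.mem_image, Set.mem_iUnion,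
    Set.mem_singleton_iff] at he
  obtain ⟨e, -, rfl⟩ | ⟨y, -, rfl⟩ := he
  · induction e
    exact Or.inl rfl
  · exact Or.inr rfl

theorem map_fst_of_mem_map_boxProdRight_edgeSet (T : H.Subgraph) {e : Sym2 (α × β)}
    (he : e ∈ (T.map (G.boxProdRight H v).toHom).edgeSet) : e.map Prod.fst = s(v, v) := by
  obtain ⟨e, -, rfl⟩ := (Subgraph.edgeSet_map _ T).subset he
  induction e
  rfl

end SimpleGraph

theorem hasEDSteinerTrees_boxProd_of_subset_fiber {α β : Type*} {G : SimpleGraph α}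
    {H : SimpleGraph β} (hH : H.Connected) {v : α} {B : Finset β} {S : Set (α × β)}
    (hS : S ⊆ {v} ×ˢ (B : Set β)) {c d : ℕ} (u : Fin c → α) (hu_inj : Injective u)
    (hu : ∀ i, G.Adj (u i) v) (hB : HasEDSteinerTrees H B d) :
    HasEDSteinerTrees (G □ H) S (c + d) := by
  obtain ⟨T, hT, hTdisj⟩ := hB
  let row (j : Fin d) := (T j).map (G.boxProdRight H v).toHom
  have hrow (j : Fin d) : (row j).coe.IsTree :=
    ((G.boxProdRight H v).toCopy.isoSubgraphMap (T j)).isTree_iff.mp (hT j).2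
  let K : Fin c ⊕ Fin d → (G □ H).Subgraph := Sum.elim (fun i => boxProdComb H (hu i) B) row
  have hK : ∀ i, (K i).Connected := by
    rintro (i | j)
    · exact boxProdComb_connected (hu i) hH
    · exact Subgraph.connected_iff'.2 (hrow j).connected
  have hSK : ∀ i, S ⊆ (K i).verts := by
    rintro (i | j)
    · exact hS.trans (subset_boxProdComb_verts (hu i))
    · rintro ⟨x, y⟩ hxy
      obtain ⟨rfl, hy⟩ := hS hxy
      exact ⟨y, (hT j).1 hy, rfl⟩
  -- Combs and rows are separated by the projections of their edges to `G`.
  have hdisj : Pairwise (Disjoint on fun i => (K i).edgeSet) := by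
    rintro (i | j) (i' | j') hne
    · have hii' : u i ≠ u i' := hu_inj.ne fun h => hne (congrArg Sum.inl h)
      refine Set.disjoint_left.2 fun e he he' => ?_
      have := (hu i).ne
      have := (hu i').ne
      have h1 := map_fst_of_mem_boxProdComb_edgeSet (hu i) he
      have h2 := map_fst_of_mem_boxProdComb_edgeSet (hu i') he'
      grind [Sym2.eq_iff]
    · refine Set.disjoint_left.2 fun e he he' => ?_
      have := (hu i).ne
      have h1 := map_fst_of_mem_boxProdComb_edgeSet (hu i) he
      have h2 := map_fst_of_mem_map_boxProdRight_edgeSet (T j') he'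
      grind [Sym2.eq_iff]
    · refine Set.disjoint_left.2 fun e he he' => ?_
      have := (hu i').ne
      have h1 := map_fst_of_mem_map_boxProdRight_edgeSet (T j) he
      have h2 := map_fst_of_mem_boxProdComb_edgeSet (hu i') he'
      grind [Sym2.eq_iff]
    · show Disjoint (row j).edgeSet (row j').edgeSet
      simp only [row, Subgraph.edgeSet_map]
      exact (Set.disjoint_image_iff (Sym2.map.injective (G.boxProdRight H v).injective)).2
        (hTdisj j j' fun h => hne (congrArg Sum.inr h))
  simpa using hasEDSteinerTrees_of_connected K hK hSK hdisj

theorem hasEDSteinerTrees_boxProd_of_image_fst_eq_singleton {α β : Type*} [Fintype α]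
    [Fintype β] [DecidableEq α] [DecidableEq β] {G : SimpleGraph α} {H : SimpleGraph β}
    (hH : H.Connected) {S : Finset (α × β)} {v : α} {k : ℕ} (hv : S.image Prod.fst = {v})
    (hk : (S.image Prod.snd).card = k) :
    HasEDSteinerTrees (G □ H) ↑S (genLambda G k + genLambda H k) := by
  obtain ⟨u, hu_inj, hu⟩ := exists_injective_adj_of_le_genLambda (Γ := G) v le_rfl
  have hS : (S.image Prod.fst).Nonempty := hv ▸ Finset.singleton_nonempty v
  have hrow : HasEDSteinerTrees H ↑(S.image Prod.snd) (genLambda H k) :=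
    hasEDSteinerTrees_of_le_steinerLambda (by simpa using Finset.image_nonempty.1 hS)
      (Nat.sInf_le ⟨_, hk, rfl⟩)
  refine hasEDSteinerTrees_boxProd_of_subset_fiber hH (fun p hp => ⟨?_, ?_⟩) u hu_inj
    (fun i => (hu i).symm) hrow
  · simpa [hv] using Finset.mem_image_of_mem Prod.fst hp
  · exact Finset.mem_image_of_mem Prod.snd hp

theorem stmt9_general {α β : Type*} [Fintype α] [Fintype β] [DecidableEq α] [DecidableEq β]
    (G : SimpleGraph α) (H : SimpleGraph β)
    (hG : G.Connected) (hH : H.Connected) (k a b : ℕ)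
    (ha : genLambda G k = a) (hb : genLambda H k = b)
    (S : Finset (α × β))
    (hproj : ((S.image Prod.fst).card = 1 ∧ (S.image Prod.snd).card = k) ∨
             ((S.image Prod.fst).card = k ∧ (S.image Prod.snd).card = 1)) :
    HasEDSteinerTrees (G □ H) ↑S (a + b) := by
  subst ha hb
  rcases hproj with ⟨h1, h2⟩ | ⟨h1, h2⟩
  · obtain ⟨v, hv⟩ := Finset.card_eq_one.1 h1
    exact hasEDSteinerTrees_boxProd_of_image_fst_eq_singleton hH hv h2
  · obtain ⟨w, hw⟩ := Finset.card_eq_one.1 h2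
    have hswap := hasEDSteinerTrees_boxProd_of_image_fst_eq_singleton (G := H) hG
      (S := S.image Prod.swap) (k := k) (by rw [Finset.image_image]; exact hw)
      (by rw [Finset.image_image]; exact h1)
    rw [add_comm]
    simpa [Set.image_image] using hswap.map (boxProdComm H G).toEmbedding

/-- same hypotheses as Lemma 2.4: one projection is a single vertex and the
    other has k distinct elements; then there are a + b edge-disjoint S-Steiner trees. -/
theorem stmt9 {α β : Type*} [Fintype α] [Fintype β] [DecidableEq α] [DecidableEq β]
    (G : SimpleGraph α) (H : SimpleGraph β)
    (hG : G.Connected) (hH : H.Connected) (k a b : ℕ)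
    (ha : genLambda G k = a) (hb : genLambda H k = b)
    (hab : a ≤ b) (hak : k / 2 ≤ a)
    (S : Finset (α × β)) (hS : S.card = k)
    (hproj : ((S.image Prod.fst).card = 1 ∧ (S.image Prod.snd).card = k) ∨
             ((S.image Prod.fst).card = k ∧ (S.image Prod.snd).card = 1)) :
    HasEDSteinerTrees (G □ H) ↑S (a + b) :=
  stmt9_general G H hG hH k a b ha hb S hproj
end

section
/- For integers m ≥ n ≥ 3 and 3 ≤ k < ⌈(2mn+3)/3⌉, the generalized k-edge-connectivity of the torus satisfies 2 ≤ λ_k(C_m □ C_n) ≤ 3. -/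
open SimpleGraph

/-!
Lower bound: the torus has two edge-disjoint spanning trees, each given by parent pointers towards
a root along which a rank strictly decreases, and every spanning tree is an `S`-Steiner tree.
Upper bound: choose `S` containing two adjacent vertices `u, v` and a third vertex. Every
`S`-Steiner tree has an edge at `u` and a different edge at `v`, while only
`deg u + deg v - 1 = 7` edges meet `{u, v}`; so at most three such trees are edge-disjoint.
-/

namespace SimpleGraph

variable {V : Type*}

section ParentGraph

variable {α : Type*} [Preorder α] {root : V} {p : V → V} {rank : V → α}

def parentGraph (root : V) (p : V → V) : SimpleGraph V :=
  fromRel fun v w => v ≠ root ∧ w = p v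

lemma parentGraph_adj {v w : V} :
    (parentGraph root p).Adj v w ↔ v ≠ w ∧ (v ≠ root ∧ w = p v ∨ w ≠ root ∧ v = p w) :=
  fromRel_adj _ _ _

lemma parentGraph_le {G : SimpleGraph V} (hp : ∀ v, v ≠ root → G.Adj v (p v)) :
    parentGraph root p ≤ G := by
  rintro v w ⟨-, ⟨hv, rfl⟩ | ⟨hw, rfl⟩⟩
  · exact hp v hv
  · exact (hp w hw).symm

lemma reachable_parentGraph_root [WellFoundedLT α]
    (hrank : ∀ v, v ≠ root → rank (p v) < rank v) (v : V) :
    (parentGraph root p).Reachable v root := by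
  induction v using (InvImage.wf rank wellFounded_lt).induction with
  | _ v ih =>
    by_cases hv : v = root
    · exact hv ▸ Reachable.rfl
    · have hadj : (parentGraph root p).Adj v (p v) :=
        parentGraph_adj.2 ⟨fun h => (hrank v hv).ne (congrArg rank h).symm, Or.inl ⟨hv, rfl⟩⟩
      exact hadj.reachable.trans (ih _ (hrank v hv))

/-- Removing the edge from `v` to its parent separates the descendants of `v` from the rest. -/
lemma isBridge_parentGraph (hrank : ∀ v, v ≠ root → rank (p v) < rank v) {v : V}
    (hv : v ≠ root) : (parentGraph root p).IsBridge s(v, p v) := by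
  let R : V → V → Prop := fun x y => x ≠ root ∧ y = p x
  have hmono : ∀ {x y}, Relation.ReflTransGen R x y → rank y ≤ rank x := by
    intro x y h
    induction h with
    | refl => exact le_rfl
    | tail _ hstep ih => exact (hstep.2 ▸ hrank _ hstep.1).le.trans ih
  rw [isBridge_iff, reachable_iff_reflTransGen]
  intro hreach
  have hdesc : ∀ {x}, Relation.ReflTransGen (parentGraph root p \ fromEdgeSet {s(v, p v)}).Adj
      v x → Relation.ReflTransGen R x v := by
    intro x h
    induction h with
    | refl => exact .refl
    | @tail x y _ hadj ih =>
      obtain ⟨⟨hxy, ⟨hx, rfl⟩ | ⟨hy, rfl⟩⟩, hne⟩ := hadj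
      · obtain rfl | ⟨c, ⟨-, rfl⟩, hc⟩ := Relation.ReflTransGen.cases_head_iff.1 ih
        · exact absurd (by simpa using hxy) hne
        · exact hc
      · exact .head ⟨hy, rfl⟩ ih
  exact (hmono (hdesc hreach)).not_gt (hrank v hv)

lemma isTree_parentGraph [WellFoundedLT α] (hrank : ∀ v, v ≠ root → rank (p v) < rank v) :
    (parentGraph root p).IsTree where
  connected := (connected_iff_exists_forall_reachable _).2
    ⟨root, fun v => (reachable_parentGraph_root hrank v).symm⟩
  isAcyclic := by
    refine isAcyclic_iff_forall_adj_isBridge.2 fun v w hadj => ?_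
    obtain ⟨-, ⟨hv, rfl⟩ | ⟨hw, rfl⟩⟩ := parentGraph_adj.1 hadj
    · exact isBridge_parentGraph hrank hv
    · exact Sym2.eq_swap ▸ isBridge_parentGraph hrank hw

lemma disjoint_parentGraph {root' : V} {p' : V → V}
    (hne : ∀ v, v ≠ root → v ≠ root' → p v ≠ p' v)
    (hback : ∀ v, v ≠ root → p v ≠ root' → p' (p v) ≠ v) :
    Disjoint (parentGraph root p) (parentGraph root' p') := by
  rw [disjoint_left]
  rintro v w ⟨-, ⟨hv, rfl⟩ | ⟨hw, rfl⟩⟩ ⟨-, ⟨hv', h⟩ | ⟨hw', h⟩⟩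
  · exact hne v hv hv' h
  · exact hback v hv hw' h.symm
  · exact hback w hw hv' h.symm
  · exact hne w hw hw' h

end ParentGraph

lemma Reachable.exists_adj_of_ne {G : SimpleGraph V} {u w : V} (h : G.Reachable u w)
    (hne : u ≠ w) : ∃ x, G.Adj u x := by
  obtain rfl | ⟨x, hx, -⟩ :=
    Relation.ReflTransGen.cases_head_iff.1 ((reachable_iff_reflTransGen _ _).1 h)
  exacts [absurd rfl hne, ⟨x, hx⟩]

/-- Otherwise the only edge at `u` and at `v` would be `s(u, v)`, cutting `{u, v}` off from `w`. -/
lemma exists_adj_adj_sym2_ne {G : SimpleGraph V} {u v w : V} (huv : u ≠ v)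
    (hu : G.Reachable u w) (hv : G.Reachable v w) (huw : u ≠ w) (hvw : v ≠ w) :
    ∃ x y, G.Adj u x ∧ G.Adj v y ∧ s(u, x) ≠ s(v, y) := by
  by_contra! h
  obtain ⟨x₀, hx₀⟩ := hu.exists_adj_of_ne huw
  obtain ⟨y₀, hy₀⟩ := hv.exists_adj_of_ne hvw
  have hclosed : ∀ z z', G.Adj z z' → (z = u ∨ z = v) → (z' = u ∨ z' = v) := by
    rintro z z' hzz' (rfl | rfl)
    · have := h z' y₀ hzz' hy₀
      grind [Sym2.eq_iff]
    · have := h x₀ z' hx₀ hzz'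
      grind [Sym2.eq_iff]
  have hreach : ∀ z, Relation.ReflTransGen G.Adj u z → z = u ∨ z = v := by
    intro z hz
    induction hz with
    | refl => exact Or.inl rfl
    | tail _ hadj ih => exact hclosed _ _ hadj ih
  grind [hreach w ((reachable_iff_reflTransGen _ _).1 hu)]

end SimpleGraph

open SimpleGraph

section SteinerTrees

variable {V : Type*} {G : SimpleGraph V}

lemma hasEDSpanningTrees_of_pairwise_disjoint {t : ℕ} (H : Fin t → SimpleGraph V)
    (hle : ∀ i, H i ≤ G) (htree : ∀ i, (H i).IsTree)
    (hdisj : Pairwise fun i j => Disjoint (H i) (H j)) :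
    HasEDSpanningTrees G t := by
  refine ⟨fun i => toSubgraph (H i) (hle i), fun i => ⟨toSubgraph.isSpanning _ _, ?_⟩,
    fun i j hij => ?_⟩
  · exact (Subgraph.spanningCoeEquivCoeOfSpanning _ (toSubgraph.isSpanning _ _)).isTree_iff.1
      (htree i)
  · exact disjoint_edgeSet.2 (hdisj hij)

lemma HasEDSpanningTrees.hasEDSteinerTrees {t : ℕ} (h : HasEDSpanningTrees G t) (S : Set V) :
    HasEDSteinerTrees G S t := by
  obtain ⟨f, hf, hdisj⟩ := h
  exact ⟨f, fun i => ⟨fun v _ => (hf i).1 v, (hf i).2⟩, hdisj⟩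

lemma mul_le_card_of_pairwise_disjoint {α : Type*} [DecidableEq α] {t r : ℕ} (A : Fin t → Set α)
    (hA : ∀ i j, i ≠ j → Disjoint (A i) (A j)) (E : Finset α)
    (hE : ∀ i, ∃ F : Finset α, F.card = r ∧ F ⊆ E ∧ ↑F ⊆ A i) : t * r ≤ E.card := by
  choose F hcard hFE hFA using hE
  have hF : Set.PairwiseDisjoint ↑(Finset.univ : Finset (Fin t)) F := fun i _ j _ hij =>
    Finset.disjoint_coe.1 ((hA i j hij).mono (hFA i) (hFA j))
  calc t * r = (Finset.univ.biUnion F).card := by simp [Finset.card_biUnion hF, hcard]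
    _ ≤ E.card := Finset.card_le_card (Finset.biUnion_subset.2 fun i _ => hFE i)

variable {S : Set V} {T : G.Subgraph} {u v w : V}

lemma IsSteinerTree.reachable (hT : IsSteinerTree G S T) (hu : u ∈ S) (hw : w ∈ S) :
    T.spanningCoe.Reachable u w :=
  (hT.2.connected ⟨u, hT.1 hu⟩ ⟨w, hT.1 hw⟩).map T.coeEmbeddingSpanningCoe.toHom

section Degree

variable [DecidableEq V] {t : ℕ}

lemma HasEDSteinerTrees.le_degree [Fintype (G.neighborSet u)] (h : HasEDSteinerTrees G S t)
    (hu : u ∈ S) (hw : w ∈ S) (huw : u ≠ w) : t ≤ G.degree u := by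
  obtain ⟨f, hf, hdisj⟩ := h
  rw [← card_incidenceFinset_eq_degree, ← mul_one t]
  refine mul_le_card_of_pairwise_disjoint _ hdisj _ fun i => ?_
  obtain ⟨x, hx⟩ := ((hf i).reachable hu hw).exists_adj_of_ne huw
  refine ⟨{s(u, x)}, Finset.card_singleton _, ?_, by simpa using hx⟩
  simpa using (f i).adj_sub hx

lemma HasEDSteinerTrees.two_mul_lt_degree_add_degree [Fintype (G.neighborSet u)]
    [Fintype (G.neighborSet v)] (h : HasEDSteinerTrees G S t) (hu : u ∈ S) (hv : v ∈ S)
    (hw : w ∈ S) (huv : G.Adj u v) (huw : u ≠ w) (hvw : v ≠ w) :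
    2 * t < G.degree u + G.degree v := by
  obtain ⟨f, hf, hdisj⟩ := h
  set E := G.incidenceFinset u ∪ G.incidenceFinset v
  have hE : E.card < G.degree u + G.degree v := by
    have hinter : s(u, v) ∈ G.incidenceFinset u ∩ G.incidenceFinset v := by
      simp [huv, mk'_mem_incidenceSet_right_iff]
    calc E.card < E.card + (G.incidenceFinset u ∩ G.incidenceFinset v).card :=
          Nat.lt_add_of_pos_right (Finset.card_pos.2 ⟨_, hinter⟩)
      _ = G.degree u + G.degree v := by
        rw [Finset.card_union_add_card_inter, card_incidenceFinset_eq_degree,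
          card_incidenceFinset_eq_degree]
  refine lt_of_le_of_lt ?_ hE
  rw [mul_comm]
  refine mul_le_card_of_pairwise_disjoint _ hdisj _ fun i => ?_
  obtain ⟨x, y, hx, hy, hxy⟩ :=
    exists_adj_adj_sym2_ne huv.ne ((hf i).reachable hu hw) ((hf i).reachable hv hw) huw hvw
  refine ⟨{s(u, x), s(v, y)}, Finset.card_pair hxy, ?_, ?_⟩
  · simp [Finset.insert_subset_iff, E, (f i).adj_sub hx, (f i).adj_sub hy]
  · simpa [Set.insert_subset_iff] using ⟨hx, hy⟩

end Degree

lemma hasEDSteinerTrees_zero : HasEDSteinerTrees G S 0 :=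
  ⟨Fin.elim0, fun i => i.elim0, fun i => i.elim0⟩

lemma bddAbove_hasEDSteinerTrees [Fintype (G.neighborSet u)] (hu : u ∈ S) (hw : w ∈ S)
    (huw : u ≠ w) : BddAbove {t | HasEDSteinerTrees G S t} := by
  classical
  exact ⟨G.degree u, fun _ ht => ht.le_degree hu hw huw⟩

lemma hasEDSteinerTrees_steinerLambda (hbdd : BddAbove {t | HasEDSteinerTrees G S t}) :
    HasEDSteinerTrees G S (steinerLambda G S) :=
  Nat.sSup_mem ⟨0, hasEDSteinerTrees_zero⟩ hbdd

section Finite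

variable [Fintype V] [DecidableRel G.Adj] {k t : ℕ}

lemma HasEDSpanningTrees.le_genLambda (h : HasEDSpanningTrees G t) (hk : 2 ≤ k)
    (hkV : k ≤ Fintype.card V) :
    t ≤ genLambda G k := by
  classical
  obtain ⟨S₀, -, hS₀⟩ := Finset.exists_subset_card_eq (s := (Finset.univ : Finset V)) (n := k)
    (by rwa [Finset.card_univ])
  refine le_csInf ⟨_, S₀, hS₀, rfl⟩ ?_
  rintro _ ⟨S, hS, rfl⟩
  obtain ⟨u, hu, w, hw, huw⟩ := Finset.one_lt_card.1 (hS ▸ hk)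
  exact le_csSup (bddAbove_hasEDSteinerTrees (S := ↑S) hu hw huw) (h.hasEDSteinerTrees _)

lemma two_mul_genLambda_lt_degree_add_degree (huv : G.Adj u v) (hk : 3 ≤ k)
    (hkV : k ≤ Fintype.card V) :
    2 * genLambda G k < G.degree u + G.degree v := by
  classical
  obtain ⟨S, huvS, -, hS⟩ := Finset.exists_subsuperset_card_eq (Finset.subset_univ {u, v})
    ((Finset.card_pair huv.ne).trans_le (by omega : 2 ≤ k)) (by rwa [Finset.card_univ])
  obtain ⟨w, hw⟩ : (S \ {u, v}).Nonempty := by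
    rw [← Finset.card_pos, Finset.card_sdiff_of_subset huvS, hS, Finset.card_pair huv.ne]
    omega
  simp only [Finset.mem_sdiff, Finset.mem_insert, Finset.mem_singleton, not_or] at hw
  have hu : u ∈ (S : Set V) := huvS (by simp)
  have hv : v ∈ (S : Set V) := huvS (by simp)
  have hlt := (hasEDSteinerTrees_steinerLambda (bddAbove_hasEDSteinerTrees hu hv huv.ne)
    ).two_mul_lt_degree_add_degree hu hv hw.1 huv (Ne.symm hw.2.1) (Ne.symm hw.2.2)
  have hle : genLambda G k ≤ steinerLambda G S := Nat.sInf_le ⟨S, hS, rfl⟩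
  omega

end Finite

end SteinerTrees

lemma cycleGraph_adj_sub_one {n : ℕ} (i : Fin (n + 2)) : (cycleGraph (n + 2)).Adj i (i - 1) :=
  cycleGraph_adj.2 (Or.inl (sub_sub_cancel i 1))

lemma cycleGraph_adj_add_one {n : ℕ} (i : Fin (n + 2)) : (cycleGraph (n + 2)).Adj i (i + 1) :=
  cycleGraph_adj.2 (Or.inr (add_sub_cancel_left i 1))

lemma Fin.val_sub_one_eq {n : ℕ} (i : Fin (n + 1)) :
    (i - 1).val = if i.val = 0 then n else i.val - 1 := by
  rw [Fin.coe_sub_one]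
  simp only [Fin.ext_iff, Fin.val_zero]

lemma Fin.val_add_one_eq {n : ℕ} (i : Fin (n + 1)) :
    (i + 1).val = if i.val = n then 0 else i.val + 1 := by
  rw [Fin.val_add_one]
  simp only [Fin.ext_iff, Fin.val_last]

section Torus

variable {a b : ℕ}

/-- `torusParent₁` runs along row `0` to the root `(0, 0)` and down the columns `i ≠ 0`; the
vertices `(0, j)` with `j ≥ 2` hang on column `-1` by wrap-around edges. `torusParent₂` runs up
column `0` to the root `(0, -1)` and left along the rows `j ≠ 0`; row `0` hangs on row `-1` by
wrap-around edges. The ranks decrease lexicographically along both. -/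
def torusParent₁ (x : Fin (a + 3) × Fin (b + 3)) : Fin (a + 3) × Fin (b + 3) :=
  if x.2 = 0 ∨ x.1 = 0 ∧ x.2 ≠ 1 then (x.1 - 1, x.2) else (x.1, x.2 - 1)

def torusParent₂ (x : Fin (a + 3) × Fin (b + 3)) : Fin (a + 3) × Fin (b + 3) :=
  if x.2 = 0 then (x.1, x.2 - 1) else if x.1 = 0 then (x.1, x.2 + 1) else (x.1 - 1, x.2)

def torusRank₁ (x : Fin (a + 3) × Fin (b + 3)) : ℕ ×ₗ ℕ :=
  toLex (x.2.val, if x.1 = 0 ∧ x.2 ≠ 0 then a + 3 else x.1.val)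

def torusRank₂ (x : Fin (a + 3) × Fin (b + 3)) : ℕ ×ₗ ℕ :=
  toLex (if x.2 = 0 then b + 3 else b + 2 - x.2.val, x.1.val)

lemma torus_adj_torusParent₁ (x : Fin (a + 3) × Fin (b + 3)) :
    (cycleGraph (a + 3) □ cycleGraph (b + 3)).Adj x (torusParent₁ x) := by
  unfold torusParent₁
  split_ifs
  · exact .inl ⟨cycleGraph_adj_sub_one _, rfl⟩
  · exact .inr ⟨cycleGraph_adj_sub_one _, rfl⟩

lemma torus_adj_torusParent₂ (x : Fin (a + 3) × Fin (b + 3)) :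
    (cycleGraph (a + 3) □ cycleGraph (b + 3)).Adj x (torusParent₂ x) := by
  unfold torusParent₂
  split_ifs
  · exact .inr ⟨cycleGraph_adj_sub_one _, rfl⟩
  · exact .inr ⟨cycleGraph_adj_add_one _, rfl⟩
  · exact .inl ⟨cycleGraph_adj_sub_one _, rfl⟩

lemma torusRank₁_lt {x : Fin (a + 3) × Fin (b + 3)} (hx : x ≠ (0, 0)) :
    torusRank₁ (torusParent₁ x) < torusRank₁ x := by
  obtain ⟨i, j⟩ := x
  simp only [torusParent₁, torusRank₁, ne_eq, Prod.mk.injEq, Fin.ext_iff, Fin.val_zero,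
    Fin.val_one] at hx ⊢
  grind [Prod.Lex.toLex_lt_toLex, Fin.val_sub_one_eq]

lemma torusRank₂_lt {x : Fin (a + 3) × Fin (b + 3)} (hx : x ≠ (0, Fin.last _)) :
    torusRank₂ (torusParent₂ x) < torusRank₂ x := by
  obtain ⟨i, j⟩ := x
  simp only [torusParent₂, torusRank₂, ne_eq, Prod.mk.injEq, Fin.ext_iff, Fin.val_zero,
    Fin.val_last] at hx ⊢
  grind [Prod.Lex.toLex_lt_toLex, Fin.val_sub_one_eq, Fin.val_add_one_eq]

lemma torusParent₁_ne_torusParent₂ {x : Fin (a + 3) × Fin (b + 3)} (h₁ : x ≠ (0, 0))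
    (h₂ : x ≠ (0, Fin.last _)) : torusParent₁ x ≠ torusParent₂ x := by
  obtain ⟨i, j⟩ := x
  unfold torusParent₁ torusParent₂
  split_ifs <;> simp only [ne_eq, Prod.mk.injEq, Fin.ext_iff, Fin.val_zero, Fin.val_one,
    Fin.val_last, Fin.val_sub_one_eq, Fin.val_add_one_eq] at * <;> grind

lemma torusParent₂_torusParent₁_ne {x : Fin (a + 3) × Fin (b + 3)} (h₁ : x ≠ (0, 0))
    (h₂ : torusParent₁ x ≠ (0, Fin.last _)) : torusParent₂ (torusParent₁ x) ≠ x := by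
  obtain ⟨i, j⟩ := x
  unfold torusParent₁ torusParent₂ at *
  split_ifs at * <;> simp only [ne_eq, Prod.mk.injEq, Fin.ext_iff, Fin.val_zero, Fin.val_one,
    Fin.val_last, Fin.val_sub_one_eq, Fin.val_add_one_eq] at * <;> grind

lemma hasEDSpanningTrees_torus :
    HasEDSpanningTrees (cycleGraph (a + 3) □ cycleGraph (b + 3)) 2 := by
  have hdisj : Disjoint (parentGraph (0, 0) torusParent₁)
      (parentGraph ((0 : Fin (a + 3)), Fin.last (b + 2)) torusParent₂) :=
    disjoint_parentGraph (fun _ h₁ h₂ => torusParent₁_ne_torusParent₂ h₁ h₂)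
      (fun _ h₁ h₂ => torusParent₂_torusParent₁_ne h₁ h₂)
  refine hasEDSpanningTrees_of_pairwise_disjoint ![_, _] (Fin.forall_fin_two.2 ⟨
      parentGraph_le fun x _ => torus_adj_torusParent₁ x,
      parentGraph_le fun x _ => torus_adj_torusParent₂ x⟩)
    (Fin.forall_fin_two.2 ⟨isTree_parentGraph fun _ => torusRank₁_lt,
      isTree_parentGraph fun _ => torusRank₂_lt⟩) ?_
  intro i j hij
  fin_cases i <;> fin_cases j <;> first | exact absurd rfl hij | exact hdisj | exact hdisj.symm

lemma degree_torus (x : Fin (a + 3) × Fin (b + 3))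
    [Fintype ((cycleGraph (a + 3) □ cycleGraph (b + 3)).neighborSet x)] :
    (cycleGraph (a + 3) □ cycleGraph (b + 3)).degree x = 4 := by
  rw [degree_boxProd, cycleGraph_degree_three_le, cycleGraph_degree_three_le]

end Torus

/-- for m ≥ n ≥ 3 and 3 ≤ k < ⌈(2mn+3)/3⌉, 2 ≤ λ_k(C_m □ C_n) ≤ 3. -/
theorem stmt13 (m n k : ℕ) (hn : 3 ≤ n) (hmn : n ≤ m)
    (hk3 : 3 ≤ k) (hk : k < (2 * m * n + 5) / 3) :
    2 ≤ genLambda (cycleGraph m □ cycleGraph n) k ∧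
      genLambda (cycleGraph m □ cycleGraph n) k ≤ 3 := by
  classical
  obtain ⟨a, rfl⟩ : ∃ a, m = a + 3 := ⟨m - 3, by omega⟩
  obtain ⟨b, rfl⟩ : ∃ b, n = b + 3 := ⟨n - 3, by omega⟩
  have hkV : k ≤ Fintype.card (Fin (a + 3) × Fin (b + 3)) := by
    rw [Fintype.card_prod, Fintype.card_fin, Fintype.card_fin]
    rw [mul_assoc] at hk
    omega
  have hadj : (cycleGraph (a + 3) □ cycleGraph (b + 3)).Adj (0, 0) (0, 1) :=
    .inr ⟨zero_add (1 : Fin (b + 3)) ▸ cycleGraph_adj_add_one 0, rfl⟩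
  have hupper := two_mul_genLambda_lt_degree_add_degree hadj hk3 hkV
  rw [degree_torus, degree_torus] at hupper
  exact ⟨hasEDSpanningTrees_torus.le_genLambda (by omega) hkV, by omega⟩
end
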